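/- arXiv:1509.00899 — 2 statements merged into one kernel-verified Lean document; each statement's English description precedes it below -/
import Mathlib

section
/- Under Model (2), with (ρ̄_n) satisfying |ρ̄_n − ρ*| = O_P(n^{−1/2}), setting w* = z − ρ* Bz and w̄ = z − ρ̄_n Bz, the sequence sup_{t ∈ A_{n,m}} |J_n(w̄, t) − J_n(w*, t)| is O_P(n^{−1/2}); in particular it converges to 0 in probability as n → ∞. -/
open MeasureTheory ProbabilityTheory Filter
open scoped RealInnerProductSpace

noncomputable section

/-- `X n = O_P(a n)`: for every `ε > 0` there are `M > 0` and `N` such that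
`P(|X n| > M * a n) ≤ ε` for all `n ≥ N`. -/
def IsBigOP {Ω : Type*} [MeasurableSpace Ω] (P : Measure Ω)
    (X : ℕ → Ω → ℝ) (a : ℕ → ℝ) : Prop :=
  ∀ ε : ℝ, 0 < ε → ∃ M : ℝ, 0 < M ∧ ∃ N : ℕ, ∀ n, N ≤ n →
    (P {ω | M * a n < |X n ω|}).toReal ≤ ε

/-- `A_{n,m}`: admissible change-point configurations
`0 = t_0 < t_1 < ⋯ < t_m < t_{m+1} = n`. -/
def Anm (n m : ℕ) : Set (Fin (m + 2) → ℕ) :=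
  {t | t 0 = 0 ∧ t (Fin.last (m + 1)) = n ∧ StrictMono t}

/-- the indicator vector of the `k`-th segment `(t_k, t_{k+1}]` (coordinates `1,…,n`). -/
def segVec (n m : ℕ) (t : Fin (m + 2) → ℕ) (k : Fin (m + 1)) :
    EuclideanSpace ℝ (Fin n) :=
  WithLp.toLp 2 fun i => if t k.castSucc < (i : ℕ) + 1 ∧ (i : ℕ) + 1 ≤ t k.succ then 1 else 0

/-- the linear span `E_t` of the segment indicator vectors. -/
def Esp (n m : ℕ) (t : Fin (m + 2) → ℕ) : Submodule ℝ (EuclideanSpace ℝ (Fin n)) :=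
  Submodule.span ℝ (Set.range (segVec n m t))

/-- orthogonal projection `π_{E_t}` of `ℝⁿ` onto `E_t`. -/
def projE (n m : ℕ) (t : Fin (m + 2) → ℕ) (x : EuclideanSpace ℝ (Fin n)) :
    EuclideanSpace ℝ (Fin n) :=
  (Submodule.orthogonalProjectionOnto (Esp n m t) x : EuclideanSpace ℝ (Fin n))

/-- `x = (x_1, …, x_n)`. -/
def vecOf (n : ℕ) (x : ℕ → ℝ) : EuclideanSpace ℝ (Fin n) :=
  WithLp.toLp 2 fun i => x ((i : ℕ) + 1)

/-- `Bx = (x_0, …, x_{n-1})`. -/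
def bvecOf (n : ℕ) (x : ℕ → ℝ) : EuclideanSpace ℝ (Fin n) :=
  WithLp.toLp 2 fun i => x (i : ℕ)

/-- the decorrelated vector `x - ρ Bx`. -/
def decor (n : ℕ) (x : ℕ → ℝ) (r : ℝ) : EuclideanSpace ℝ (Fin n) :=
  vecOf n x - r • bvecOf n x

/-- `J_n(x, t) = (1/n)(‖π_{E_{t*}} x‖² - ‖π_{E_t} x‖²)`. -/
def Jn (n m : ℕ) (tstar t : Fin (m + 2) → ℕ) (x : EuclideanSpace ℝ (Fin n)) : ℝ :=
  (‖projE n m tstar x‖ ^ 2 - ‖projE n m t x‖ ^ 2) / n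

/-- `K_n(x, t) = (1/n)‖(π_{E_{t*}} - π_{E_t}) 𝔼x‖²`. -/
def Kn (n m : ℕ) (tstar t : Fin (m + 2) → ℕ) (Ex : EuclideanSpace ℝ (Fin n)) : ℝ :=
  ‖projE n m tstar Ex - projE n m t Ex‖ ^ 2 / n

/-- `V_n(x, t)`. -/
def Vn (n m : ℕ) (tstar t : Fin (m + 2) → ℕ) (x Ex : EuclideanSpace ℝ (Fin n)) : ℝ :=
  (‖projE n m tstar (x - Ex)‖ ^ 2 - ‖projE n m t (x - Ex)‖ ^ 2) / n

/-- `W_n(x, t)`. -/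
def Wn (n m : ℕ) (tstar t : Fin (m + 2) → ℕ) (x Ex : EuclideanSpace ℝ (Fin n)) : ℝ :=
  2 * (⟪projE n m tstar (x - Ex), projE n m tstar Ex⟫ -
       ⟪projE n m t (x - Ex), projE n m t Ex⟫) / n

/-- `C'_{ν,γ,n,m}(I)`: admissible configurations `t` with
`ν λ̲⁻² ≤ ‖t - t*‖ ≤ n γ Δ_{τ*}`, `t_k ≥ t*_k` for all `k`,
`ν λ̲⁻² ≤ t_k - t*_k ≤ n γ Δ_{τ*}` for `k ∈ I` and `t_k - t*_k < ν λ̲⁻²` for `k ∉ I`. -/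
def CprimeI (n m : ℕ) (tstar : Fin (m + 2) → ℕ) (lamb Dtau ν γ : ℝ)
    (I : Set (Fin m)) : Set (Fin (m + 2) → ℕ) :=
  {t | t ∈ Anm n m ∧
    ν / lamb ^ 2 ≤
      Real.sqrt (∑ k : Fin m,
        ((t k.castSucc.succ : ℝ) - (tstar k.castSucc.succ : ℝ)) ^ 2) ∧
    Real.sqrt (∑ k : Fin m,
        ((t k.castSucc.succ : ℝ) - (tstar k.castSucc.succ : ℝ)) ^ 2) ≤ n * γ * Dtau ∧
    (∀ k : Fin m, tstar k.castSucc.succ ≤ t k.castSucc.succ) ∧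
    (∀ k : Fin m, k ∈ I →
      ν / lamb ^ 2 ≤ (t k.castSucc.succ : ℝ) - (tstar k.castSucc.succ : ℝ) ∧
      (t k.castSucc.succ : ℝ) - (tstar k.castSucc.succ : ℝ) ≤ n * γ * Dtau) ∧
    (∀ k : Fin m, k ∉ I →
      (t k.castSucc.succ : ℝ) - (tstar k.castSucc.succ : ℝ) < ν / lamb ^ 2)}

open Topology
open scoped ENNReal

/-!
Since `w̄ - w* = (ρ* - ρ̄ₙ) Bz` and every `π_{E_t}` is a linear contraction,
`|Jₙ(w̄, t) - Jₙ(w*, t)| ≤ 2 ‖w̄ + w*‖ ‖w̄ - w*‖ / n`, uniformly in `t`, and this is at most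
`|ρ̄ₙ - ρ*| (4 + |ρ̄ₙ - ρ*|) · 2 ∑_{i ≤ n} zᵢ² / n`. As `|ρ*| < 1`, the recursion
`zᵢ = ρ* zᵢ₋₁ + δ*ₖ + εᵢ` keeps `𝔼 zᵢ²` bounded uniformly in `i ≤ n` and `n`, so by Markov's
inequality the last factor is `O_P(1)`, while the first is `O_P(n^{-1/2})`.
-/

lemma abs_sq_norm_map_sub_sq_norm_map_le {E F : Type*} [NormedAddCommGroup E]
    [InnerProductSpace ℝ E] [NormedAddCommGroup F] [InnerProductSpace ℝ F]
    (L : E →L[ℝ] F) (hL : ‖L‖ ≤ 1) (x y : E) :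
    |‖L x‖ ^ 2 - ‖L y‖ ^ 2| ≤ ‖x + y‖ * ‖x - y‖ := by
  have hnorm : ∀ v, ‖L v‖ ≤ ‖v‖ := fun v => by simpa using L.le_of_opNorm_le hL v
  have hinner : ‖L x‖ ^ 2 - ‖L y‖ ^ 2 = ⟪L (x + y), L (x - y)⟫ := by
    rw [map_add, map_sub, inner_add_left, inner_sub_right, inner_sub_right,
      real_inner_self_eq_norm_sq, real_inner_self_eq_norm_sq, real_inner_comm (L x)]
    ring
  rw [hinner]
  exact (abs_real_inner_le_norm _ _).trans
    (mul_le_mul (hnorm _) (hnorm _) (norm_nonneg _) (norm_nonneg _))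

lemma abs_Jn_sub_Jn_le (n m : ℕ) (ts t : Fin (m + 2) → ℕ) (x y : EuclideanSpace ℝ (Fin n)) :
    |Jn n m ts t x - Jn n m ts t y| ≤ 2 * (‖x + y‖ * ‖x - y‖) / n := by
  have hproj : ∀ s : Fin (m + 2) → ℕ,
      |‖projE n m s x‖ ^ 2 - ‖projE n m s y‖ ^ 2| ≤ ‖x + y‖ * ‖x - y‖ := fun s =>
    abs_sq_norm_map_sub_sq_norm_map_le _ (Esp n m s).starProjection_norm_le x y
  rw [Jn, Jn, ← sub_div, abs_div, Nat.abs_cast]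
  gcongr
  calc _ = |(‖projE n m ts x‖ ^ 2 - ‖projE n m ts y‖ ^ 2) -
          (‖projE n m t x‖ ^ 2 - ‖projE n m t y‖ ^ 2)| := by ring_nf
    _ ≤ _ := abs_sub _ _
    _ ≤ _ := by linarith [hproj ts, hproj t]

lemma norm_vecOf_le (n : ℕ) (x : ℕ → ℝ) :
    ‖vecOf n x‖ ≤ √(∑ i ∈ Finset.range (n + 1), x i ^ 2) := by
  rw [EuclideanSpace.norm_eq]
  gcongr
  simp only [vecOf, Real.norm_eq_abs, sq_abs]
  rw [Fin.sum_univ_eq_sum_range (fun i => x (i + 1) ^ 2), Finset.sum_range_succ']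
  exact le_add_of_nonneg_right (sq_nonneg _)

lemma norm_bvecOf_le (n : ℕ) (x : ℕ → ℝ) :
    ‖bvecOf n x‖ ≤ √(∑ i ∈ Finset.range (n + 1), x i ^ 2) := by
  rw [EuclideanSpace.norm_eq]
  gcongr
  simp only [bvecOf, Real.norm_eq_abs, sq_abs]
  rw [Fin.sum_univ_eq_sum_range (fun i => x i ^ 2), Finset.sum_range_succ]
  exact le_add_of_nonneg_right (sq_nonneg _)

lemma iSup_abs_Jn_decor_sub_le (n m : ℕ) (ts : Fin (m + 2) → ℕ) (x : ℕ → ℝ) {r ρ : ℝ}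
    (hρ : |ρ| ≤ 1) :
    ⨆ t ∈ Anm n m, |Jn n m ts t (decor n x r) - Jn n m ts t (decor n x ρ)| ≤
      |r - ρ| * ((4 + |r - ρ|) * (2 * (∑ i ∈ Finset.range (n + 1), x i ^ 2) / n)) := by
  set S := ∑ i ∈ Finset.range (n + 1), x i ^ 2
  set v := vecOf n x
  set b := bvecOf n x
  set D := |r - ρ|
  have hS : 0 ≤ S := Finset.sum_nonneg fun i _ => sq_nonneg (x i)
  have hv : ‖v‖ ≤ √S := norm_vecOf_le n x
  have hb : ‖b‖ ≤ √S := norm_bvecOf_le n x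
  have hsub : ‖decor n x r - decor n x ρ‖ = D * ‖b‖ := by
    rw [show decor n x r - decor n x ρ = (ρ - r) • b by simp only [decor]; module,
      norm_smul, Real.norm_eq_abs, abs_sub_comm]
  have hadd : ‖decor n x r + decor n x ρ‖ ≤ 2 * ‖v‖ + (2 + D) * ‖b‖ := by
    have hrρ : |r + ρ| ≤ 2 + D := by
      calc |r + ρ| = |(r - ρ) + 2 * ρ| := by ring_nf
        _ ≤ D + 2 * |ρ| := by simpa [abs_mul] using abs_add_le (r - ρ) (2 * ρ)
        _ ≤ 2 + D := by linarith
    calc ‖decor n x r + decor n x ρ‖ = ‖(2 : ℝ) • v - (r + ρ) • b‖ := by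
          simp only [decor]; congr 1; module
      _ ≤ 2 * ‖v‖ + |r + ρ| * ‖b‖ := by
          simpa [norm_smul] using norm_sub_le ((2 : ℝ) • v) ((r + ρ) • b)
      _ ≤ 2 * ‖v‖ + (2 + D) * ‖b‖ := by gcongr
  have hbound : ‖decor n x r + decor n x ρ‖ * ‖decor n x r - decor n x ρ‖ ≤ D * ((4 + D) * S) := by
    have hvb : ‖v‖ * ‖b‖ ≤ S := by
      simpa [Real.mul_self_sqrt hS] using mul_le_mul hv hb (norm_nonneg _) (Real.sqrt_nonneg S)
    have hbb : ‖b‖ * ‖b‖ ≤ S := by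
      simpa [Real.mul_self_sqrt hS] using mul_le_mul hb hb (norm_nonneg _) (Real.sqrt_nonneg S)
    have hD : 0 ≤ D := abs_nonneg _
    rw [hsub]
    calc _ ≤ (2 * ‖v‖ + (2 + D) * ‖b‖) * (D * ‖b‖) := by gcongr
      _ = D * (2 * (‖v‖ * ‖b‖) + (2 + D) * (‖b‖ * ‖b‖)) := by ring
      _ ≤ D * (2 * S + (2 + D) * S) := by gcongr
      _ = D * ((4 + D) * S) := by ring
  have hrhs : 0 ≤ D * ((4 + D) * (2 * S / n)) := by positivity
  refine Real.iSup_le (fun t => Real.iSup_le (fun _ => ?_) hrhs) hrhs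
  calc _ ≤ 2 * (D * ((4 + D) * S)) / n := by
        grw [abs_Jn_sub_Jn_le, hbound]
    _ = D * ((4 + D) * (2 * S / n)) := by ring

lemma exists_castSucc_lt_and_le_succ {α : Type*} [LinearOrder α] {k : ℕ} (t : Fin (k + 1) → α)
    {a : α} (h0 : t 0 < a) (hlast : a ≤ t (Fin.last k)) :
    ∃ j : Fin k, t j.castSucc < a ∧ a ≤ t j.succ := by
  obtain ⟨j, hj, hjk, hj1⟩ := Nat.exists_not_and_succ_of_not_zero_of_exists
    (p := fun j => ∃ h : j < k + 1, a ≤ t ⟨j, h⟩) (by simpa using h0)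
    ⟨k, by simpa [Fin.last] using hlast⟩
  exact ⟨⟨j, by omega⟩, not_le.1 fun h => hj ⟨by omega, h⟩, hj1⟩

-- `r * a + c` is the convex combination `|r| • (±a) + (1 - |r|) • (c / (1 - |r|))`.
lemma sq_mul_add_le {r : ℝ} (hr : |r| < 1) (a c : ℝ) :
    (r * a + c) ^ 2 ≤ |r| * a ^ 2 + c ^ 2 / (1 - |r|) := by
  have h1 : 0 < 1 - |r| := by linarith
  have hq : c ^ 2 / (1 - |r|) * (1 - |r|) = c ^ 2 := div_mul_cancel₀ _ h1.ne'
  rcases abs_cases r with ⟨hr', hr0⟩ | ⟨hr', hr0⟩ <;> rw [hr'] at h1 hq ⊢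
  · nlinarith [mul_nonneg hr0 (sq_nonneg ((1 - r) * a - c)), div_nonneg (sq_nonneg c) h1.le]
  · nlinarith [mul_nonneg (neg_nonneg.2 hr0.le) (sq_nonneg ((1 + r) * a + c)),
      div_nonneg (sq_nonneg c) h1.le]

section SecondMoments

variable {Ω : Type*} [MeasurableSpace Ω] {P : Measure Ω}

lemma memLp_of_map_eq {γ : Measure ℝ} [NeZero γ] {X : Ω → ℝ} {p : ℝ≥0∞} (hX : P.map X = γ)
    (hγ : MemLp id p γ) : MemLp X p P := by
  have hae : AEMeasurable X P := .of_map_ne_zero (hX ▸ NeZero.ne γ)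
  exact (memLp_map_measure_iff (hX ▸ hγ.aestronglyMeasurable) hae).1 (hX ▸ hγ)

lemma integral_sq_le_of_innovations {x : ℕ → Ω → ℝ} {r b : ℝ} (hr : |r| < 1) {N : ℕ}
    (hx0 : MemLp (x 0) 2 P)
    (hinnov : ∀ i < N, MemLp (fun ω => x (i + 1) ω - r * x i ω) 2 P ∧
      ∫ ω, (x (i + 1) ω - r * x i ω) ^ 2 ∂P ≤ b) :
    ∀ i ≤ N, MemLp (x i) 2 P ∧
      ∫ ω, x i ω ^ 2 ∂P ≤ max (∫ ω, x 0 ω ^ 2 ∂P) (b / (1 - |r|) ^ 2) := by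
  have h1 : 0 < 1 - |r| := by linarith
  set K := max (∫ ω, x 0 ω ^ 2 ∂P) (b / (1 - |r|) ^ 2)
  intro i
  induction i with
  | zero => exact fun _ => ⟨hx0, le_max_left _ _⟩
  | succ i ih =>
    intro hi
    obtain ⟨hxi, hxiK⟩ := ih (by omega)
    obtain ⟨hu, hub⟩ := hinnov i (by omega)
    set u := fun ω => x (i + 1) ω - r * x i ω
    have hdecomp : x (i + 1) = fun ω => r * x i ω + u ω := by funext ω; simp [u]
    have hpt : ∀ ω, x (i + 1) ω ^ 2 ≤ |r| * x i ω ^ 2 + u ω ^ 2 / (1 - |r|) := fun ω => by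
      rw [hdecomp]; exact sq_mul_add_le hr _ _
    have hint : Integrable (fun ω => |r| * x i ω ^ 2 + u ω ^ 2 / (1 - |r|)) P :=
      (hxi.integrable_sq.const_mul _).add (hu.integrable_sq.div_const _)
    refine ⟨hdecomp ▸ (hxi.const_mul r).add hu, ?_⟩
    have hb : b / (1 - |r|) ≤ (1 - |r|) * K := by
      calc b / (1 - |r|) = (1 - |r|) * (b / (1 - |r|) ^ 2) := by field_simp
        _ ≤ (1 - |r|) * K := by gcongr; exact le_max_right _ _
    calc ∫ ω, x (i + 1) ω ^ 2 ∂P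
        ≤ ∫ ω, (|r| * x i ω ^ 2 + u ω ^ 2 / (1 - |r|)) ∂P :=
          integral_mono_of_nonneg (Eventually.of_forall fun _ => sq_nonneg _) hint
            (Eventually.of_forall hpt)
      _ = |r| * ∫ ω, x i ω ^ 2 ∂P + (∫ ω, u ω ^ 2 ∂P) / (1 - |r|) := by
          rw [integral_add (hxi.integrable_sq.const_mul _) (hu.integrable_sq.div_const _),
            integral_const_mul, integral_div]
      _ ≤ |r| * K + b / (1 - |r|) := by gcongr
      _ ≤ K := by linarith

lemma exists_integral_sq_le_of_recursion [IsFiniteMeasure P] {m : ℕ} (tstar : ℕ → Fin (m + 2) → ℕ)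
    (htstar0 : ∀ n, tstar n 0 = 0) (htstarlast : ∀ n, tstar n (Fin.last (m + 1)) = n)
    {ρ : ℝ} (hρ : |ρ| < 1) (c : ℝ) (δ : Fin (m + 1) → ℝ) {η₀ : Ω → ℝ} (hη₀ : MemLp η₀ 2 P)
    {γ : Measure ℝ} [NeZero γ] (hγ : MemLp id 2 γ) {ε : ℕ → Ω → ℝ}
    (hε : ∀ i, 1 ≤ i → P.map (ε i) = γ) {z : ℕ → ℕ → Ω → ℝ}
    (hz0 : ∀ n ω, z n 0 ω = c + η₀ ω)
    (hzrec : ∀ n, ∀ k : Fin (m + 1), ∀ i : ℕ, tstar n k.castSucc < i → i ≤ tstar n k.succ →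
      ∀ ω, z n i ω = ρ * z n (i - 1) ω + δ k + ε i ω) :
    ∃ K, ∀ n, ∀ i ≤ n, MemLp (z n i) 2 P ∧ ∫ ω, z n i ω ^ 2 ∂P ≤ K := by
  set b := ∑ k, ∫ y, (δ k + y) ^ 2 ∂γ
  refine ⟨max (∫ ω, (c + η₀ ω) ^ 2 ∂P) (b / (1 - |ρ|) ^ 2), fun n => ?_⟩
  have hz0' : z n 0 = fun ω => c + η₀ ω := funext (hz0 n)
  have hinnov : ∀ i < n, MemLp (fun ω => z n (i + 1) ω - ρ * z n i ω) 2 P ∧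
      ∫ ω, (z n (i + 1) ω - ρ * z n i ω) ^ 2 ∂P ≤ b := by
    intro i hi
    obtain ⟨k, hk0, hk1⟩ := exists_castSucc_lt_and_le_succ (tstar n) (a := i + 1)
      (by simp [htstar0]) (by simp [htstarlast]; omega)
    have hu : ∀ ω, z n (i + 1) ω - ρ * z n i ω = δ k + ε (i + 1) ω := fun ω => by
      rw [hzrec n k (i + 1) hk0 hk1 ω, Nat.add_sub_cancel]; ring
    have hεi := hε (i + 1) (by omega)
    have hae : AEMeasurable (ε (i + 1)) P := .of_map_ne_zero (hεi ▸ NeZero.ne γ)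
    simp only [hu]
    refine ⟨(memLp_const (δ k)).add (memLp_of_map_eq hεi hγ), ?_⟩
    calc ∫ ω, (δ k + ε (i + 1) ω) ^ 2 ∂P = ∫ y, (δ k + y) ^ 2 ∂γ := by
          rw [← hεi, integral_map hae (by fun_prop)]
      _ ≤ b := Finset.single_le_sum (f := fun k => ∫ y, (δ k + y) ^ 2 ∂γ)
          (fun k _ => integral_nonneg fun _ => sq_nonneg _) (Finset.mem_univ k)
  simpa only [hz0'] using
    integral_sq_le_of_innovations hρ (x := z n) (hz0' ▸ (memLp_const c).add hη₀) hinnov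

end SecondMoments

namespace IsBigOP

variable {Ω : Type*} [MeasurableSpace Ω] {P : Measure Ω} {X Y Z : ℕ → Ω → ℝ} {a b c : ℕ → ℝ}

lemma const (x : ℝ) : IsBigOP P (fun _ _ => x) (fun _ => 1) := by
  intro ε hε
  refine ⟨|x| + 1, by positivity, 0, fun n _ => ?_⟩
  simp [show ¬ (|x| + 1 < |x|) by linarith, hε.le]

variable [IsFiniteMeasure P]

lemma mono (hXY : ∀ n ω, |X n ω| ≤ |Y n ω|) (hY : IsBigOP P Y a) : IsBigOP P X a := by
  intro ε hε
  obtain ⟨M, hM, N, hN⟩ := hY ε hε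
  refine ⟨M, hM, N, fun n hn => le_trans (measureReal_mono fun ω hω => ?_) (hN n hn)⟩
  exact lt_of_lt_of_le hω (hXY n ω)

lemma mono_rate (hab : ∀ n, a n ≤ b n) (hX : IsBigOP P X a) : IsBigOP P X b := by
  intro ε hε
  obtain ⟨M, hM, N, hN⟩ := hX ε hε
  refine ⟨M, hM, N, fun n hn => le_trans (measureReal_mono fun ω hω => ?_) (hN n hn)⟩
  exact lt_of_le_of_lt (mul_le_mul_of_nonneg_left (hab n) hM.le) hω

lemma of_bounded_of_bounded (hX : IsBigOP P X a) (hY : IsBigOP P Y b)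
    (hZ : ∀ M₁ M₂ : ℝ, 0 < M₁ → 0 < M₂ → ∃ M > 0, ∀ n ω,
      |X n ω| ≤ M₁ * a n → |Y n ω| ≤ M₂ * b n → |Z n ω| ≤ M * c n) :
    IsBigOP P Z c := by
  intro ε hε
  obtain ⟨M₁, hM₁, N₁, hN₁⟩ := hX (ε / 2) (half_pos hε)
  obtain ⟨M₂, hM₂, N₂, hN₂⟩ := hY (ε / 2) (half_pos hε)
  obtain ⟨M, hM, hZM⟩ := hZ M₁ M₂ hM₁ hM₂
  refine ⟨M, hM, max N₁ N₂, fun n hn => ?_⟩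
  have hsub : {ω | M * c n < |Z n ω|} ⊆
      {ω | M₁ * a n < |X n ω|} ∪ {ω | M₂ * b n < |Y n ω|} := by
    intro ω hω
    by_contra hnot
    simp only [Set.mem_union, Set.mem_ofPred_eq, not_or, not_lt] at hnot hω
    exact (hZM n ω hnot.1 hnot.2).not_gt hω
  calc P.real {ω | M * c n < |Z n ω|}
      ≤ P.real {ω | M₁ * a n < |X n ω|} + P.real {ω | M₂ * b n < |Y n ω|} :=
        (measureReal_mono hsub).trans (measureReal_union_le _ _)
    _ ≤ ε / 2 + ε / 2 := add_le_add (hN₁ n (le_of_max_le_left hn)) (hN₂ n (le_of_max_le_right hn))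
    _ = ε := add_halves ε

lemma add (hX : IsBigOP P X a) (hY : IsBigOP P Y a) : IsBigOP P (X + Y) a :=
  of_bounded_of_bounded hX hY fun M₁ M₂ hM₁ hM₂ => ⟨M₁ + M₂, by positivity, fun n ω hXn hYn =>
    (abs_add_le _ _).trans (by rw [add_mul]; exact add_le_add hXn hYn)⟩

lemma mul (hX : IsBigOP P X a) (hY : IsBigOP P Y b) :
    IsBigOP P (X * Y) (fun n => a n * b n) :=
  of_bounded_of_bounded hX hY fun M₁ M₂ hM₁ hM₂ => ⟨M₁ * M₂, by positivity, fun n ω hXn hYn => by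
    rw [Pi.mul_apply, Pi.mul_apply, abs_mul,
      show M₁ * M₂ * (a n * b n) = (M₁ * a n) * (M₂ * b n) by ring]
    exact mul_le_mul hXn hYn (abs_nonneg _) ((abs_nonneg _).trans hXn)⟩

lemma of_integral_le (hY0 : ∀ n ω, 0 ≤ Y n ω) {C : ℝ}
    (hY : ∀ᶠ n in atTop, Integrable (Y n) P ∧ ∫ ω, Y n ω ∂P ≤ C) :
    IsBigOP P Y (fun _ => 1) := by
  obtain ⟨N, hN⟩ := eventually_atTop.1 hY
  intro ε hε
  have hM : 0 < (|C| + 1) / ε := by positivity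
  refine ⟨(|C| + 1) / ε, hM, N, fun n hn => ?_⟩
  obtain ⟨hint, hle⟩ := hN n hn
  have markov := mul_meas_ge_le_integral_of_nonneg (Eventually.of_forall (hY0 n)) hint
    ((|C| + 1) / ε)
  rw [div_mul_eq_mul_div, div_le_iff₀ hε] at markov
  have hsub : {ω | (|C| + 1) / ε * 1 < |Y n ω|} ⊆ {ω | (|C| + 1) / ε ≤ Y n ω} :=
    fun ω hω => by
      rw [Set.mem_ofPred_eq, mul_one, abs_of_nonneg (hY0 n ω)] at hω; exact hω.le
  refine (measureReal_mono hsub).trans (le_of_mul_le_mul_left ?_ (by positivity : 0 < |C| + 1))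
  calc _ ≤ (∫ ω, Y n ω ∂P) * ε := markov
    _ ≤ C * ε := by gcongr
    _ ≤ (|C| + 1) * ε := by gcongr; linarith [le_abs_self C]

lemma tendsto_measureReal_lt (hX : IsBigOP P X a) (ha : Tendsto a atTop (𝓝 0))
    {ν : ℝ} (hν : 0 < ν) : Tendsto (fun n => P.real {ω | ν < X n ω}) atTop (𝓝 0) := by
  refine tendsto_order.2 ⟨fun e he => Eventually.of_forall fun n => he.trans_le measureReal_nonneg,
    fun e he => ?_⟩
  obtain ⟨M, hM, N, hN⟩ := hX (e / 2) (half_pos he)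
  have hsmall : ∀ᶠ n in atTop, M * a n < ν := by
    simpa using (ha.const_mul M).eventually (gt_mem_nhds (by simpa using hν))
  filter_upwards [hsmall, eventually_ge_atTop N] with n hn hnN
  calc P.real {ω | ν < X n ω} ≤ P.real {ω | M * a n < |X n ω|} :=
        measureReal_mono fun ω hω => hn.trans (lt_of_lt_of_le hω (le_abs_self _))
    _ ≤ e / 2 := hN n hnN
    _ < e := half_lt_self he

end IsBigOP

lemma isBigOP_two_mul_sum_sq_div {Ω : Type*} [MeasurableSpace Ω] {P : Measure Ω}
    [IsFiniteMeasure P] {z : ℕ → ℕ → Ω → ℝ} {K : ℝ}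
    (hz : ∀ n, ∀ i ≤ n, MemLp (z n i) 2 P ∧ ∫ ω, z n i ω ^ 2 ∂P ≤ K) :
    IsBigOP P (fun n ω => 2 * (∑ i ∈ Finset.range (n + 1), z n i ω ^ 2) / n) (fun _ => 1) := by
  have hK : 0 ≤ K := (integral_nonneg fun _ => sq_nonneg _).trans (hz 0 0 le_rfl).2
  refine IsBigOP.of_integral_le (C := 4 * K) (fun n ω => by positivity) ?_
  filter_upwards [eventually_ge_atTop 1] with n hn
  have hint : ∀ i ∈ Finset.range (n + 1), Integrable (fun ω => z n i ω ^ 2) P := fun i hi =>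
    (hz n i (Finset.mem_range_succ_iff.1 hi)).1.integrable_sq
  refine ⟨((integrable_finsetSum _ hint).const_mul 2).div_const _, ?_⟩
  have hn' : (1 : ℝ) ≤ n := by exact_mod_cast hn
  calc ∫ ω, 2 * (∑ i ∈ Finset.range (n + 1), z n i ω ^ 2) / n ∂P
      = 2 * (∑ i ∈ Finset.range (n + 1), ∫ ω, z n i ω ^ 2 ∂P) / n := by
        rw [integral_div, integral_const_mul, integral_finsetSum _ hint]
    _ ≤ 2 * (∑ _i ∈ Finset.range (n + 1), K) / n := by
        gcongr with i hi
        exact (hz n i (Finset.mem_range_succ_iff.1 hi)).2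
    _ ≤ 4 * K := by
        rw [Finset.sum_const, Finset.card_range, nsmul_eq_mul, div_le_iff₀ (by positivity)]
        push_cast
        nlinarith

lemma tendsto_one_div_sqrt_natCast : Tendsto (fun n : ℕ => 1 / √(n : ℝ)) atTop (𝓝 0) := by
  simpa only [one_div, Function.comp_def] using
    tendsto_inv_atTop_zero.comp (Real.tendsto_sqrt_atTop.comp tendsto_natCast_atTop_atTop)

lemma one_div_sqrt_natCast_le_one (n : ℕ) : 1 / √(n : ℝ) ≤ 1 := by
  rcases Nat.eq_zero_or_pos n with rfl | hn
  · simp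
  · rw [div_le_one (by positivity), Real.one_le_sqrt]
    exact_mod_cast hn

theorem stmt_4_general
    {Ω : Type*} [MeasurableSpace Ω] (P : Measure Ω) [IsProbabilityMeasure P]
    (m : ℕ)
    (σ : ℝ)
    (ρ : ℝ) (hρ₁ : -1 < ρ) (hρ₂ : ρ < 1)
    (μ : Fin (m + 1) → ℝ)
    (τ : Fin (m + 2) → ℝ) (hτ0 : τ 0 = 0) (hτ1 : τ (Fin.last (m + 1)) = 1)
    (tstar : ℕ → Fin (m + 2) → ℕ)
    (htstardef : ∀ n k, tstar n k = ⌊(n : ℝ) * τ k⌋₊)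
    (ε : ℕ → Ω → ℝ)
    (η : ℕ → Ω → ℝ)
    (hεdist : ∀ i : ℕ, 1 ≤ i → P.map (ε i) = gaussianReal 0 (σ ^ 2).toNNReal)
    (hηdist : P.map (η 0) = gaussianReal 0 ((σ ^ 2) / (1 - ρ ^ 2)).toNNReal)
    (δ : Fin (m + 1) → ℝ)
    (z : ℕ → ℕ → Ω → ℝ)
    (hz0 : ∀ n ω, z n 0 ω = μ 0 + η 0 ω)
    (hzrec : ∀ n, ∀ k : Fin (m + 1), ∀ i : ℕ,
      tstar n k.castSucc < i → i ≤ tstar n k.succ →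
      ∀ ω, z n i ω = ρ * z n (i - 1) ω + δ k + ε i ω)
    (ρbar : ℕ → Ω → ℝ)
    (hρbar : IsBigOP P (fun n ω => ρbar n ω - ρ) (fun n => 1 / Real.sqrt n))
 :
    (IsBigOP P (fun n ω => ⨆ t ∈ Anm n m,
        |Jn n m (tstar n) t (decor n (fun i => z n i ω) (ρbar n ω)) -
          Jn n m (tstar n) t (decor n (fun i => z n i ω) ρ)|)
      (fun n => 1 / Real.sqrt n)) ∧
    (∀ ν : ℝ, 0 < ν →
      Tendsto (fun n => (P {ω | ν < ⨆ t ∈ Anm n m,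
        |Jn n m (tstar n) t (decor n (fun i => z n i ω) (ρbar n ω)) -
          Jn n m (tstar n) t (decor n (fun i => z n i ω) ρ)|}).toReal) atTop (nhds 0)) := by
  have hρ : |ρ| < 1 := abs_lt.2 ⟨hρ₁, hρ₂⟩
  have htstar0 : ∀ n, tstar n 0 = 0 := fun n => by simp [htstardef, hτ0]
  have htstarlast : ∀ n, tstar n (Fin.last (m + 1)) = n := fun n => by simp [htstardef, hτ1]
  obtain ⟨K, hK⟩ := exists_integral_sq_le_of_recursion tstar htstar0 htstarlast hρ (μ 0) δ
    (memLp_of_map_eq hηdist (memLp_id_gaussianReal 2)) (memLp_id_gaussianReal 2) hεdist hz0 hzrec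
  have hD : IsBigOP P (fun n ω => |ρbar n ω - ρ|) (fun n => 1 / √n) :=
    hρbar.mono fun n ω => (abs_abs _).le
  have hbound := hD.mul (((IsBigOP.const 4).add (hD.mono_rate one_div_sqrt_natCast_le_one)).mul
    (isBigOP_two_mul_sum_sq_div hK))
  have hmain : IsBigOP P (fun n ω => ⨆ t ∈ Anm n m,
      |Jn n m (tstar n) t (decor n (fun i => z n i ω) (ρbar n ω)) -
        Jn n m (tstar n) t (decor n (fun i => z n i ω) ρ)|) (fun n => 1 / √n) := by
    simp only [mul_one] at hbound
    refine hbound.mono fun n ω => ?_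
    rw [abs_of_nonneg (Real.iSup_nonneg fun t => Real.iSup_nonneg fun _ => abs_nonneg _)]
    exact (iSup_abs_Jn_decor_sub_le n m (tstar n) _ hρ.le).trans (le_abs_self _)
  exact ⟨hmain, fun ν hν => hmain.tendsto_measureReal_lt tendsto_one_div_sqrt_natCast hν⟩

theorem stmt_4
    {Ω : Type*} [MeasurableSpace Ω] (P : Measure Ω) [IsProbabilityMeasure P]
    (m : ℕ) (hm : 1 ≤ m)
    (σ : ℝ) (hσ : 0 < σ)
    (ρ : ℝ) (hρ₁ : -1 < ρ) (hρ₂ : ρ < 1)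
    (μ : Fin (m + 1) → ℝ)
    (τ : Fin (m + 2) → ℝ) (hτ0 : τ 0 = 0) (hτ1 : τ (Fin.last (m + 1)) = 1)
    (hτmono : StrictMono τ)
    (tstar : ℕ → Fin (m + 2) → ℕ)
    (htstardef : ∀ n k, tstar n k = ⌊(n : ℝ) * τ k⌋₊)
    (ε : ℕ → Ω → ℝ) (hεmeas : ∀ i, Measurable (ε i))
    (η : ℕ → Ω → ℝ) (hηmeas : Measurable (η 0))
    (hηrec : ∀ i : ℕ, ∀ ω, η (i + 1) ω = ρ * η i ω + ε (i + 1) ω)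
    (hindep : iIndepFun
      (fun i : ℕ => if i = 0 then η 0 else ε i) P)
    (hεdist : ∀ i : ℕ, 1 ≤ i → P.map (ε i) = gaussianReal 0 (σ ^ 2).toNNReal)
    (hηdist : P.map (η 0) = gaussianReal 0 ((σ ^ 2) / (1 - ρ ^ 2)).toNNReal)
    (δ : Fin (m + 1) → ℝ) (hδ : ∀ k, δ k = (1 - ρ) * μ k)
    (z : ℕ → ℕ → Ω → ℝ)
    (hz0 : ∀ n ω, z n 0 ω = μ 0 + η 0 ω)
    (hzrec : ∀ n, ∀ k : Fin (m + 1), ∀ i : ℕ,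
      tstar n k.castSucc < i → i ≤ tstar n k.succ →
      ∀ ω, z n i ω = ρ * z n (i - 1) ω + δ k + ε i ω)
    (ρbar : ℕ → Ω → ℝ) (hρbarmeas : ∀ n, Measurable (ρbar n))
    (hρbar : IsBigOP P (fun n ω => ρbar n ω - ρ) (fun n => 1 / Real.sqrt n))
 :
    (IsBigOP P (fun n ω => ⨆ t ∈ Anm n m,
        |Jn n m (tstar n) t (decor n (fun i => z n i ω) (ρbar n ω)) -
          Jn n m (tstar n) t (decor n (fun i => z n i ω) ρ)|)
      (fun n => 1 / Real.sqrt n)) ∧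
    (∀ ν : ℝ, 0 < ν →
      Tendsto (fun n => (P {ω | ν < ⨆ t ∈ Anm n m,
        |Jn n m (tstar n) t (decor n (fun i => z n i ω) (ρbar n ω)) -
          Jn n m (tstar n) t (decor n (fun i => z n i ω) ρ)|}).toReal) atTop (nhds 0)) :=
  stmt_4_general P m σ ρ hρ₁ hρ₂ μ τ hτ0 hτ1 tstar htstardef ε η hεdist hηdist δ z hz0 hzrec ρbar
    hρbar
end
end

section
/- Let (y_i)_{0≤i≤n} be from Model (1), (z_i) the recursively defined process, and (ρ̄_n) random variables with |ρ̄_n − ρ*| = O_P(n^{−1/2}). Define Δ̄ = (Δ̄_i)_{1≤i≤n} ∈ ℝⁿ by Δ̄_i = Δ*_i + (ρ* − ρ̄_n)(z_{i−1} − y_{i−1}). Then ‖Δ̄‖ = O_P(1), where ‖·‖ is the Euclidean norm on ℝⁿ. -/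
open MeasureTheory ProbabilityTheory Filter
open scoped RealInnerProductSpace

noncomputable section

/-!
Everything but the last step is deterministic. `Δ*` vanishes off the `m` points `t*_k + 1`, so
`‖Δ*‖ ≤ D := ∑ₖ |ρ* (μ*_k - μ*_{k-1})|`. The difference `d_i = z_i - y_i` satisfies `d_0 = 0` and
`d_i = Δ*_i + ρ* d_{i-1}`, hence `|d_i| ≤ D / (1 - |ρ*|)` and
`‖(d_0, …, d_{n-1})‖ ≤ √n D / (1 - |ρ*|)`. Therefore `‖Δ̄‖ ≤ D + D / (1 - |ρ*|) · √n |ρ̄_n - ρ*|`, and `√n |ρ̄_n - ρ*| = O_P(1)`.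
-/

theorem abs_le_sum_abs_of_eq_zero_off {f : ℕ → ℝ} {S : Finset ℕ} (hf : ∀ j ∉ S, f j = 0)
    (i : ℕ) : |f i| ≤ ∑ j ∈ S, |f j| := by
  by_cases hi : i ∈ S
  · exact Finset.single_le_sum (fun j _ => abs_nonneg (f j)) hi
  · rw [hf i hi, abs_zero]
    exact Finset.sum_nonneg fun j _ => abs_nonneg (f j)

open Finset in
theorem norm_vecOf_le_sum_abs {n : ℕ} {f : ℕ → ℝ} (S : Finset ℕ) (hf : ∀ j ∉ S, f j = 0) :
    ‖vecOf n f‖ ≤ ∑ j ∈ S, |f j| := by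
  rw [EuclideanSpace.norm_eq, Real.sqrt_le_iff]
  refine ⟨sum_nonneg fun _ _ => abs_nonneg _, ?_⟩
  calc ∑ i : Fin n, ‖(vecOf n f).ofLp i‖ ^ 2
      = ∑ j ∈ Ico 1 (n + 1), f j ^ 2 := by
        simp [vecOf, Fin.sum_univ_eq_sum_range (fun j => f (j + 1) ^ 2), sum_Ico_eq_sum_range,
          add_comm]
    _ ≤ ∑ j ∈ Ico 1 (n + 1) ∪ S, f j ^ 2 :=
        sum_le_sum_of_subset_of_nonneg subset_union_left fun _ _ _ => sq_nonneg _
    _ = ∑ j ∈ S, |f j| ^ 2 :=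
        (sum_subset subset_union_right fun j _ hj => by simp [hf j hj]).symm.trans
          (by simp_rw [sq_abs])
    _ ≤ (∑ j ∈ S, |f j|) ^ 2 := sum_sq_le_sq_sum_of_nonneg fun _ _ => abs_nonneg _

theorem norm_bvecOf_le_sqrt_mul {n : ℕ} {g : ℕ → ℝ} {C : ℝ} (hg : ∀ i, |g i| ≤ C) :
    ‖bvecOf n g‖ ≤ √n * C := by
  have hC : 0 ≤ C := (abs_nonneg _).trans (hg 0)
  rw [EuclideanSpace.norm_eq, Real.sqrt_le_iff, mul_pow, Real.sq_sqrt n.cast_nonneg]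
  refine ⟨by positivity, ?_⟩
  calc ∑ i : Fin n, ‖(bvecOf n g).ofLp i‖ ^ 2 ≤ ∑ _i : Fin n, C ^ 2 :=
        Finset.sum_le_sum fun i _ => by
          simpa [bvecOf] using pow_le_pow_left₀ (abs_nonneg _) (hg i) 2
    _ = n * C ^ 2 := by simp

theorem vecOf_add_mul_pred (n : ℕ) (a b : ℕ → ℝ) (c : ℝ) :
    vecOf n (fun i => a i + c * b (i - 1)) = vecOf n a + c • bvecOf n b := by
  ext i
  simp [vecOf, bvecOf]

theorem abs_le_div_of_ar1 {ρ A : ℝ} (hρ : |ρ| < 1) {a d : ℕ → ℝ} (ha : ∀ i, |a i| ≤ A)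
    (hd0 : d 0 = 0) (hd : ∀ i, d (i + 1) = a (i + 1) + ρ * d i) (i : ℕ) :
    |d i| ≤ A / (1 - |ρ|) := by
  have h1ρ : 0 < 1 - |ρ| := by linarith
  have hA : 0 ≤ A := (abs_nonneg _).trans (ha 0)
  induction i with
  | zero => rw [hd0, abs_zero]; positivity
  | succ i ih =>
    calc |d (i + 1)| ≤ |a (i + 1)| + |ρ| * |d i| := by
          rw [hd, ← abs_mul]; exact abs_add_le _ _
      _ ≤ A + |ρ| * (A / (1 - |ρ|)) := by gcongr; exact ha _
      _ = A / (1 - |ρ|) := by field_simp; ring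

theorem IsBigOP.one_of_abs_le {Ω : Type*} [MeasurableSpace Ω] {P : Measure Ω}
    [IsFiniteMeasure P] {X Y : ℕ → Ω → ℝ} {a : ℕ → ℝ} (hY : IsBigOP P Y a) {A B : ℝ}
    (hB : 0 ≤ B) (hX : ∀ n ω, |X n ω| ≤ A + B * (|Y n ω| / a n)) :
    IsBigOP P X (fun _ => 1) := by
  intro δ hδ
  obtain ⟨M, hM, N, hN⟩ := hY δ hδ
  refine ⟨|A| + B * M + 1, by positivity, N, fun n hn => ?_⟩
  -- On `|Y| ≤ M a n` we get `|Y| / a n ≤ M`, also when `a n ≤ 0` thanks to `x / 0 = 0`.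
  have hsub : {ω | (|A| + B * M + 1) * 1 < |X n ω|} ⊆ {ω | M * a n < |Y n ω|} := by
    intro ω hω
    simp only [Set.mem_ofPred_eq] at hω ⊢
    by_contra! hYle
    have hratio : |Y n ω| / a n ≤ M := by
      rcases lt_trichotomy (a n) 0 with han | han | han
      · linarith [abs_nonneg (Y n ω), mul_neg_of_pos_of_neg hM han]
      · rw [han, div_zero]; exact hM.le
      · rwa [div_le_iff₀ han]
    linarith [hX n ω, mul_le_mul_of_nonneg_left hratio hB, le_abs_self A]
  exact (ENNReal.toReal_mono (measure_ne_top P _) (measure_mono hsub)).trans (hN n hn)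

theorem stmt_13_general
    {Ω : Type*} [MeasurableSpace Ω] (P : Measure Ω) [IsProbabilityMeasure P]
    (m : ℕ)
    (ρ : ℝ) (hρ₁ : -1 < ρ) (hρ₂ : ρ < 1)
    (μ : Fin (m + 1) → ℝ)
    (tstar : ℕ → Fin (m + 2) → ℕ)
    (y : ℕ → ℕ → Ω → ℝ)
    (Δs : ℕ → ℕ → ℝ)
    (hΔ1 : ∀ n, ∀ k : Fin m, Δs n (tstar n k.castSucc.succ + 1) =
      -ρ * (μ k.succ - μ k.castSucc))
    (hΔ2 : ∀ n i, (∀ k : Fin m, i ≠ tstar n k.castSucc.succ + 1) → Δs n i = 0)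
    (z : ℕ → ℕ → Ω → ℝ)
    (hz0 : ∀ n ω, z n 0 ω = y n 0 ω)
    (hzrec : ∀ n, ∀ i : ℕ, ∀ ω, z n (i + 1) ω =
      ((y n (i + 1) ω - ρ * y n i ω) + Δs n (i + 1)) + ρ * z n i ω)
    (ρbar : ℕ → Ω → ℝ)
    (hρbar : IsBigOP P (fun n ω => ρbar n ω - ρ) (fun n => 1 / Real.sqrt n))
 :
    IsBigOP P (fun n ω => ‖vecOf n (fun i =>
        Δs n i + (ρ - ρbar n ω) * (z n (i - 1) ω - y n (i - 1) ω))‖) (fun _ => 1) := by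
  have hρ : |ρ| < 1 := abs_lt.2 ⟨hρ₁, hρ₂⟩
  set D := ∑ k : Fin m, |ρ * (μ k.succ - μ k.castSucc)|
  let S n := Finset.univ.image fun k : Fin m => tstar n k.castSucc.succ + 1
  have hΔsupp : ∀ n, ∀ j ∉ S n, Δs n j = 0 := fun n j hj =>
    hΔ2 n j fun k hk => hj (Finset.mem_image.2 ⟨k, Finset.mem_univ _, hk.symm⟩)
  have hΔl1 : ∀ n, ∑ j ∈ S n, |Δs n j| ≤ D := fun n =>
    (Finset.sum_image_le_of_nonneg fun _ _ => abs_nonneg _).trans_eq <| by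
      simp only [hΔ1, neg_mul, abs_neg, D]
  have hzy : ∀ n ω i, |z n i ω - y n i ω| ≤ D / (1 - |ρ|) := fun n ω =>
    abs_le_div_of_ar1 hρ (fun i => (abs_le_sum_abs_of_eq_zero_off (hΔsupp n) i).trans (hΔl1 n))
      (by rw [hz0, sub_self]) (fun i => by rw [hzrec]; ring)
  have hB : 0 ≤ D / (1 - |ρ|) :=
    div_nonneg (Finset.sum_nonneg fun _ _ => abs_nonneg _) (by linarith)
  refine hρbar.one_of_abs_le (A := D) hB fun n ω => ?_
  rw [abs_norm, vecOf_add_mul_pred n (Δs n) (fun i => z n i ω - y n i ω), div_div_eq_mul_div,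
    div_one, abs_sub_comm]
  calc ‖vecOf n (Δs n) + (ρ - ρbar n ω) • bvecOf n (fun i => z n i ω - y n i ω)‖
      ≤ ‖vecOf n (Δs n)‖ + |ρ - ρbar n ω| * ‖bvecOf n (fun i => z n i ω - y n i ω)‖ := by
        rw [← Real.norm_eq_abs, ← norm_smul]; exact norm_add_le _ _
    _ ≤ D + |ρ - ρbar n ω| * (√n * (D / (1 - |ρ|))) := by
        gcongr
        · exact (norm_vecOf_le_sum_abs (S n) (hΔsupp n)).trans (hΔl1 n)
        · exact norm_bvecOf_le_sqrt_mul (hzy n ω)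
    _ = D + D / (1 - |ρ|) * (|ρ - ρbar n ω| * √n) := by ring

theorem stmt_13
    {Ω : Type*} [MeasurableSpace Ω] (P : Measure Ω) [IsProbabilityMeasure P]
    (m : ℕ) (hm : 1 ≤ m)
    (σ : ℝ) (hσ : 0 < σ)
    (ρ : ℝ) (hρ₁ : -1 < ρ) (hρ₂ : ρ < 1)
    (μ : Fin (m + 1) → ℝ)
    (τ : Fin (m + 2) → ℝ) (hτ0 : τ 0 = 0) (hτ1 : τ (Fin.last (m + 1)) = 1)
    (hτmono : StrictMono τ)
    (tstar : ℕ → Fin (m + 2) → ℕ)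
    (htstardef : ∀ n k, tstar n k = ⌊(n : ℝ) * τ k⌋₊)
    (ε : ℕ → Ω → ℝ) (hεmeas : ∀ i, Measurable (ε i))
    (η : ℕ → Ω → ℝ) (hηmeas : Measurable (η 0))
    (hηrec : ∀ i : ℕ, ∀ ω, η (i + 1) ω = ρ * η i ω + ε (i + 1) ω)
    (hindep : iIndepFun
      (fun i : ℕ => if i = 0 then η 0 else ε i) P)
    (hεdist : ∀ i : ℕ, 1 ≤ i → P.map (ε i) = gaussianReal 0 (σ ^ 2).toNNReal)
    (hηdist : P.map (η 0) = gaussianReal 0 ((σ ^ 2) / (1 - ρ ^ 2)).toNNReal)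
    (y : ℕ → ℕ → Ω → ℝ)
    (hy0 : ∀ n ω, y n 0 ω = μ 0 + η 0 ω)
    (hyseg : ∀ n, ∀ k : Fin (m + 1), ∀ i : ℕ,
      tstar n k.castSucc < i → i ≤ tstar n k.succ →
      ∀ ω, y n i ω = μ k + η i ω)
    (Δs : ℕ → ℕ → ℝ)
    (hΔ1 : ∀ n, ∀ k : Fin m, Δs n (tstar n k.castSucc.succ + 1) =
      -ρ * (μ k.succ - μ k.castSucc))
    (hΔ2 : ∀ n i, (∀ k : Fin m, i ≠ tstar n k.castSucc.succ + 1) → Δs n i = 0)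
    (z : ℕ → ℕ → Ω → ℝ)
    (hz0 : ∀ n ω, z n 0 ω = y n 0 ω)
    (hzrec : ∀ n, ∀ i : ℕ, ∀ ω, z n (i + 1) ω =
      ((y n (i + 1) ω - ρ * y n i ω) + Δs n (i + 1)) + ρ * z n i ω)
    (ρbar : ℕ → Ω → ℝ) (hρbarmeas : ∀ n, Measurable (ρbar n))
    (hρbar : IsBigOP P (fun n ω => ρbar n ω - ρ) (fun n => 1 / Real.sqrt n))
 :
    IsBigOP P (fun n ω => ‖vecOf n (fun i =>
        Δs n i + (ρ - ρbar n ω) * (z n (i - 1) ω - y n (i - 1) ω))‖) (fun _ => 1) :=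
  stmt_13_general P m ρ hρ₁ hρ₂ μ tstar y Δs hΔ1 hΔ2 z hz0 hzrec ρbar hρbar
end
end
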